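/- Let (Ξ, ν) be a σ-finite measure space and ψ = (ψ_1, …, ψ_l) : Ξ → ℝ^l measurable, and suppose the representation is minimal, i.e., for every c ∈ ℝ^l with c ≠ 0 the function x ↦ ⟨c, ψ(x)⟩ is not ν-a.e. equal to a constant. Then the mean mapping Λ is injective on the interior of A: if α, β lie in the interior of A = {α : Z(α) < ∞} and Λ(α) = Λ(β), then α = β. -/

import Mathlib

open MeasureTheory Real
open scoped ENNReal

/-- The partition function `Z(α) = ∫ exp(-⟨α, ψ(x)⟩) dν(x)`, valued in `ℝ≥0∞`. -/
noncomputable def partitionZ {Ξ : Type*} [MeasurableSpace Ξ] (ν : Measure Ξ) {l : ℕ}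
    (ψ : Ξ → Fin l → ℝ) (α : Fin l → ℝ) : ℝ≥0∞ :=
  ∫⁻ x, ENNReal.ofReal (Real.exp (-(∑ k, α k * ψ x k))) ∂ν

/-- The mean mapping `Λ(α) = E_α[ψ]`. -/
noncomputable def meanMap {Ξ : Type*} [MeasurableSpace Ξ] (ν : Measure Ξ) {l : ℕ}
    (ψ : Ξ → Fin l → ℝ) (α : Fin l → ℝ) : Fin l → ℝ :=
  fun k => (∫ x, ψ x k * Real.exp (-(∑ i, α i * ψ x i)) ∂ν) /
    (∫ x, Real.exp (-(∑ i, α i * ψ x i)) ∂ν)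

/-!
Suppose `Λ(α) = Λ(β)` with `α ≠ β`, and put `Y = ⟨β - α, ψ⟩`, so that
`p(·, β) ∝ e^{-Y} p(·, α)`. Both means of `Y` agree, say `E_α[Y] = E_β[Y] = m`, which says that
`Y` and `e^{-Y}` are uncorrelated under `p(·, α)`, i.e. `E_α[(Y - m)(e^{-m} - e^{-Y})] = 0`.
The integrand is nonnegative and vanishes only where `Y = m`, so `Y = m` a.e., contradicting
minimality. On the interior of `A` all the integrals involved are finite, since
`α ± δ v ∈ A` for small `δ > 0` and `δ |t| ≤ e^{δt} + e^{-δt}`.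
-/

theorem Real.abs_le_exp_add_exp_neg (t : ℝ) : |t| ≤ exp t + exp (-t) := by
  linarith [add_one_le_exp |t|, exp_abs_le t]

theorem StrictAnti.sub_mul_sub_pos {f : ℝ → ℝ} (hf : StrictAnti f) {x y : ℝ} (h : x ≠ y) :
    0 < (x - y) * (f y - f x) := by
  rcases h.lt_or_gt with h | h
  · exact mul_pos_of_neg_of_neg (sub_neg.2 h) (sub_neg.2 (hf h))
  · exact mul_pos (sub_pos.2 h) (sub_pos.2 (hf h))

theorem StrictAnti.sub_mul_sub_nonneg {f : ℝ → ℝ} (hf : StrictAnti f) (x y : ℝ) :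
    0 ≤ (x - y) * (f y - f x) := by
  rcases eq_or_ne x y with rfl | h
  · simp
  · exact (hf.sub_mul_sub_pos h).le

section Covariance

variable {Ξ : Type*} [MeasurableSpace Ξ] {μ : Measure Ξ}

theorem ae_eq_of_integral_mul_eq_of_strictAnti {f : ℝ → ℝ} (hf : StrictAnti f) {Y w : Ξ → ℝ}
    (hw : ∀ x, 0 < w x) (hw_int : Integrable w μ) (hYw : Integrable (fun x => Y x * w x) μ)
    (hfw : Integrable (fun x => f (Y x) * w x) μ)
    (hYfw : Integrable (fun x => Y x * (f (Y x) * w x)) μ) {m : ℝ}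
    (hm : ∫ x, Y x * w x ∂μ = m * ∫ x, w x ∂μ)
    (hm_f : ∫ x, Y x * (f (Y x) * w x) ∂μ = m * ∫ x, f (Y x) * w x ∂μ) :
    ∀ᵐ x ∂μ, Y x = m := by
  set g : Ξ → ℝ := fun x => (Y x - m) * (f m - f (Y x)) * w x
  have hu : Integrable (fun x => f m * (Y x * w x) - f m * m * w x) μ :=
    (hYw.const_mul _).sub (hw_int.const_mul _)
  have hv : Integrable (fun x => Y x * (f (Y x) * w x) - m * (f (Y x) * w x)) μ :=
    hYfw.sub (hfw.const_mul _)
  have hg_eq : g = fun x => (f m * (Y x * w x) - f m * m * w x)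
      - (Y x * (f (Y x) * w x) - m * (f (Y x) * w x)) := by
    ext x; ring
  have hg_int : Integrable g μ := hg_eq ▸ hu.sub hv
  have hg_zero : ∫ x, g x ∂μ = 0 := by
    rw [hg_eq, integral_sub hu hv, integral_sub (hYw.const_mul _) (hw_int.const_mul _),
      integral_sub hYfw (hfw.const_mul _), integral_const_mul, integral_const_mul,
      integral_const_mul, hm, hm_f]
    ring
  have hg_nonneg : 0 ≤ g := fun x => mul_nonneg (hf.sub_mul_sub_nonneg _ _) (hw x).le
  filter_upwards [(integral_eq_zero_iff_of_nonneg hg_nonneg hg_int).1 hg_zero] with x hx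
  by_contra hne
  exact (mul_pos (hf.sub_mul_sub_pos hne) (hw x)).ne' hx

end Covariance

section ExponentialFamily

variable {Ξ : Type*} [MeasurableSpace Ξ] {ν : Measure Ξ} {l : ℕ} {ψ : Ξ → Fin l → ℝ}

theorem integrable_exp_neg_dotProduct (hψ : Measurable ψ) {γ : Fin l → ℝ}
    (hγ : partitionZ ν ψ γ < ⊤) : Integrable (fun x => exp (-(γ ⬝ᵥ ψ x))) ν :=
  ⟨by fun_prop, (hasFiniteIntegral_iff_ofReal (.of_forall fun _ => (exp_pos _).le)).2 hγ⟩

theorem exists_pos_partitionZ_add_smul_lt_top {α : Fin l → ℝ}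
    (hα : α ∈ interior {γ | partitionZ ν ψ γ < ⊤}) (v : Fin l → ℝ) :
    ∃ δ : ℝ, 0 < δ ∧ partitionZ ν ψ (α + δ • v) < ⊤ ∧ partitionZ ν ψ (α + (-δ) • v) < ⊤ := by
  have hline : Filter.Tendsto (fun s : ℝ => α + s • v) (nhds 0) (nhds α) :=
    Continuous.tendsto' (by fun_prop) 0 α (by simp)
  obtain ⟨ε, hε, hball⟩ :=
    Metric.eventually_nhds_iff.1 (hline.eventually (mem_interior_iff_mem_nhds.1 hα))
  exact ⟨ε / 2, by positivity, hball (by simp [abs_of_pos hε]; linarith),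
    hball (by simp [abs_of_pos hε]; linarith)⟩

theorem integrable_dotProduct_mul_exp_neg_dotProduct (hψ : Measurable ψ) {α : Fin l → ℝ}
    (hα : α ∈ interior {γ | partitionZ ν ψ γ < ⊤}) (v : Fin l → ℝ) :
    Integrable (fun x => (v ⬝ᵥ ψ x) * exp (-(α ⬝ᵥ ψ x))) ν := by
  obtain ⟨δ, hδ, hplus, hminus⟩ := exists_pos_partitionZ_add_smul_lt_top hα v
  refine (((integrable_exp_neg_dotProduct hψ hplus).add
    (integrable_exp_neg_dotProduct hψ hminus)).const_mul δ⁻¹).mono' (by fun_prop)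
    (.of_forall fun x => ?_)
  simp only [Pi.add_apply, add_dotProduct, smul_dotProduct, smul_eq_mul, norm_mul, norm_eq_abs,
    abs_of_pos (exp_pos _)]
  calc |v ⬝ᵥ ψ x| * exp (-(α ⬝ᵥ ψ x))
      = δ⁻¹ * |δ * (v ⬝ᵥ ψ x)| * exp (-(α ⬝ᵥ ψ x)) := by
        rw [abs_mul, abs_of_pos hδ, inv_mul_cancel_left₀ hδ.ne']
    _ ≤ δ⁻¹ * (exp (δ * (v ⬝ᵥ ψ x)) + exp (-(δ * (v ⬝ᵥ ψ x)))) * exp (-(α ⬝ᵥ ψ x)) := by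
        gcongr; exact abs_le_exp_add_exp_neg _
    _ = _ := by
        simp only [neg_add, neg_mul, neg_neg, exp_add]
        ring

theorem integrable_apply_mul_exp_neg_dotProduct (hψ : Measurable ψ) {α : Fin l → ℝ}
    (hα : α ∈ interior {γ | partitionZ ν ψ γ < ⊤}) (k : Fin l) :
    Integrable (fun x => ψ x k * exp (-(α ⬝ᵥ ψ x))) ν := by
  simpa [single_dotProduct] using integrable_dotProduct_mul_exp_neg_dotProduct hψ hα (Pi.single k 1)

theorem dotProduct_meanMap {γ : Fin l → ℝ}
    (hint : ∀ k, Integrable (fun x => ψ x k * exp (-(γ ⬝ᵥ ψ x))) ν) (c : Fin l → ℝ) :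
    c ⬝ᵥ meanMap ν ψ γ =
      (∫ x, (c ⬝ᵥ ψ x) * exp (-(γ ⬝ᵥ ψ x)) ∂ν) / ∫ x, exp (-(γ ⬝ᵥ ψ x)) ∂ν := by
  have hexpand (x : Ξ) : (c ⬝ᵥ ψ x) * exp (-(γ ⬝ᵥ ψ x)) =
      ∑ k, c k * (ψ x k * exp (-(γ ⬝ᵥ ψ x))) := by
    rw [dotProduct, Finset.sum_mul]
    simp only [mul_assoc]
  simp only [hexpand, integral_finsetSum _ fun k _ => (hint k).const_mul (c k),
    integral_const_mul, Finset.sum_div, mul_div_assoc]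
  rfl

end ExponentialFamily

theorem minimal_meanMap_injective_general {Ξ : Type*} [MeasurableSpace Ξ]
    (ν : Measure Ξ) {l : ℕ} (ψ : Ξ → Fin l → ℝ) (hψ : Measurable ψ)
    (hmin : ∀ c : Fin l → ℝ, c ≠ 0 → ¬ ∃ b : ℝ, ∀ᵐ x ∂ν, ∑ k, c k * ψ x k = b) :
    ∀ α ∈ interior {α : Fin l → ℝ | partitionZ ν ψ α < ⊤},
      ∀ β ∈ interior {α : Fin l → ℝ | partitionZ ν ψ α < ⊤},
        meanMap ν ψ α = meanMap ν ψ β → α = β := by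
  intro α hα β hβ hΛ
  by_contra hne
  refine hmin (β - α) (sub_ne_zero.2 (Ne.symm hne)) ?_
  rcases eq_zero_or_neZero ν with rfl | _
  · exact ⟨0, by simp⟩
  have hweight (x : Ξ) : exp (-(β ⬝ᵥ ψ x)) = exp (-((β - α) ⬝ᵥ ψ x)) * exp (-(α ⬝ᵥ ψ x)) := by
    simp only [← exp_add, sub_dotProduct]
    ring_nf
  have hmean : (β - α) ⬝ᵥ meanMap ν ψ α = (β - α) ⬝ᵥ meanMap ν ψ β := by rw [hΛ]
  rw [dotProduct_meanMap (integrable_apply_mul_exp_neg_dotProduct hψ hα),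
    dotProduct_meanMap (integrable_apply_mul_exp_neg_dotProduct hψ hβ)] at hmean
  have hαA : α ∈ {γ | partitionZ ν ψ γ < ⊤} := interior_subset hα
  have hβA : β ∈ {γ | partitionZ ν ψ γ < ⊤} := interior_subset hβ
  have hZα := integrable_exp_neg_dotProduct hψ hαA
  have hZβ := integrable_exp_neg_dotProduct hψ hβA
  refine ⟨_, ae_eq_of_integral_mul_eq_of_strictAnti (f := fun y => exp (-y))
    (fun _ _ h => exp_lt_exp.2 (neg_lt_neg h)) (fun _ => exp_pos _) hZα
    (integrable_dotProduct_mul_exp_neg_dotProduct hψ hα (β - α))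
    (by simpa only [hweight] using hZβ)
    (by simpa only [hweight] using integrable_dotProduct_mul_exp_neg_dotProduct hψ hβ (β - α))
    (div_mul_cancel₀ _ (integral_exp_pos hZα).ne').symm ?_⟩
  simp only [← hweight]
  rw [hmean, div_mul_cancel₀ _ (integral_exp_pos hZβ).ne']

/-- If the representation is minimal (no nontrivial linear combination of the potentials
is ν-a.e. constant), then the mean mapping `Λ` is injective on the interior of
`A = {α | Z(α) < ∞}`. -/
theorem minimal_meanMap_injective {Ξ : Type*} [MeasurableSpace Ξ]
    (ν : Measure Ξ) [SigmaFinite ν] {l : ℕ} (ψ : Ξ → Fin l → ℝ) (hψ : Measurable ψ)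
    (hmin : ∀ c : Fin l → ℝ, c ≠ 0 → ¬ ∃ b : ℝ, ∀ᵐ x ∂ν, ∑ k, c k * ψ x k = b) :
    ∀ α ∈ interior {α : Fin l → ℝ | partitionZ ν ψ α < ⊤},
      ∀ β ∈ interior {α : Fin l → ℝ | partitionZ ν ψ α < ⊤},
        meanMap ν ψ α = meanMap ν ψ β → α = β :=
  minimal_meanMap_injective_general ν ψ hψ hmin
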